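/- arXiv:2106.02394 — 6 statements merged into one kernel-verified Lean document; each statement's English description precedes it below -/
import Mathlib

section
/- If f : [0,1] → ℝ is convex, and there exist finitely many points 0 = w₀ < w₁ < ... < w_K = 1 such that f is strictly convex on each open interval (w_{k-1}, w_k), then f is strictly convex on all of [0,1]. -/
/-- If a convex function has equal adjacent slopes at `x < y < z`, it is affine on `(x, z)`. -/
lemma affine_of_slope_eq (f : ℝ → ℝ) (hconv : ConvexOn ℝ (Set.Icc (0:ℝ) 1) f)
    {x y z : ℝ} (hx : x ∈ Set.Icc (0:ℝ) 1) (hz : z ∈ Set.Icc (0:ℝ) 1)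
    (hxy : x < y) (hyz : y < z)
    (heq : (f y - f x) / (y - x) = (f z - f y) / (z - y)) :
    ∀ u, x < u → u < z → f u = f y + ((f z - f y) / (z - y)) * (u - y) := by
  intro u hxu huz
  have hy : y ∈ Set.Icc (0:ℝ) 1 := ⟨le_trans hx.1 hxy.le, le_trans hyz.le hz.2⟩
  have hu : u ∈ Set.Icc (0:ℝ) 1 := ⟨le_trans hx.1 hxu.le, le_trans huz.le hz.2⟩
  rcases eq_or_ne u y with rfl | hne
  · ring
  have hxslope : (f x - f y) / (x - y) = (f z - f y) / (z - y) := by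
    rw [← heq]
    rw [div_eq_div_iff (by linarith) (by linarith)]
    ring
  have h1 : (f x - f y) / (x - y) ≤ (f u - f y) / (u - y) :=
    hconv.secant_mono hy hx hu (ne_of_lt hxy) hne hxu.le
  have h2 : (f u - f y) / (u - y) ≤ (f z - f y) / (z - y) :=
    hconv.secant_mono hy hu hz hne (ne_of_gt hyz) huz.le
  have h3 : (f u - f y) / (u - y) = (f z - f y) / (z - y) := le_antisymm h2 (hxslope ▸ h1)
  have hud : u - y ≠ 0 := sub_ne_zero.mpr hne
  have hzy : z - y ≠ 0 := by intro hh; linarith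
  field_simp at h3 ⊢
  linarith

/-- If `f` is convex on `[0,1]` and there are finitely many points
`0 = w 0 < w 1 < ... < w K = 1` such that `f` is strictly convex on each `(w k, w (k+1))`,
then `f` is strictly convex on `[0,1]`. -/
theorem strictConvexOn_Icc_of_piecewise (f : ℝ → ℝ) (K : ℕ) (hK : 0 < K) (w : ℕ → ℝ)
    (hw0 : w 0 = 0) (hwK : w K = 1) (hmono : ∀ k < K, w k < w (k + 1))
    (hconv : ConvexOn ℝ (Set.Icc (0:ℝ) 1) f)
    (hstrict : ∀ k < K, StrictConvexOn ℝ (Set.Ioo (w k) (w (k + 1))) f) :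
    StrictConvexOn ℝ (Set.Icc (0:ℝ) 1) f := by
  apply strictConvexOn_of_slope_strict_mono_adjacent (convex_Icc 0 1)
  intro x y z hx hz hxy hyz
  by_contra h
  push_neg at h
  have hle : (f y - f x) / (y - x) ≤ (f z - f y) / (z - y) :=
    hconv.slope_mono_adjacent hx hz hxy hyz
  have heq : (f y - f x) / (y - x) = (f z - f y) / (z - y) := le_antisymm hle h
  set m := (f z - f y) / (z - y) with hm
  have haff := affine_of_slope_eq f hconv hx hz hxy hyz heq
  -- find k with w k ≤ x < w (k+1)
  classical
  set k := Nat.findGreatest (fun k => w k ≤ x) (K - 1) with hkdef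
  have hk1 : w k ≤ x := Nat.findGreatest_spec (P := fun k => w k ≤ x) (Nat.zero_le _) (by show w 0 ≤ x; rw [hw0]; exact hx.1)
  have hkK : k < K := lt_of_le_of_lt (Nat.findGreatest_le _) (Nat.sub_lt hK one_pos)
  have hk2 : x < w (k + 1) := by
    by_cases hcase : k + 1 ≤ K - 1
    · have := Nat.findGreatest_is_greatest (P := fun k => w k ≤ x) (Nat.lt_succ_self k) hcase
      exact lt_of_not_ge this
    · have hkeq : k + 1 = K := by omega
      rw [hkeq, hwK]
      exact lt_of_lt_of_le (lt_trans hxy hyz) hz.2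
  -- build three points in (w k, w (k+1)) ∩ (x, z)
  set b0 := min z (w (k + 1)) with hb0
  have hxb0 : x < b0 := lt_min (lt_trans hxy hyz) hk2
  set p := x + (b0 - x) / 4 with hp
  set q := x + 3 * (b0 - x) / 4 with hq
  have hb0z : b0 ≤ z := min_le_left _ _
  have hb0w : b0 ≤ w (k + 1) := min_le_right _ _
  have hxp : x < p := by rw [hp]; linarith
  have hpq : p < q := by rw [hp, hq]; linarith
  have hqb : q < b0 := by rw [hq]; linarith
  have hpmem : p ∈ Set.Ioo (w k) (w (k + 1)) := ⟨lt_of_le_of_lt hk1 hxp, by linarith⟩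
  have hqmem : q ∈ Set.Ioo (w k) (w (k + 1)) :=
    ⟨lt_of_le_of_lt hk1 (lt_trans hxp hpq), by linarith⟩
  have hfp : f p = f y + m * (p - y) := haff p hxp (by linarith)
  have hfq : f q = f y + m * (q - y) := haff q (by linarith) (by linarith)
  have hfr : f ((1/2 : ℝ) • p + (1/2 : ℝ) • q) = f y + m * ((p + q) / 2 - y) := by
    have : (1/2 : ℝ) • p + (1/2 : ℝ) • q = (p + q) / 2 := by
      simp [smul_eq_mul]; ring
    rw [this]
    exact haff _ (by rw [hp, hq]; linarith) (by rw [hp, hq]; linarith)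
  have hlt := (hstrict k hkK).2 hpmem hqmem (ne_of_lt hpq) one_half_pos one_half_pos
    (by norm_num)
  rw [hfr, hfp, hfq] at hlt
  simp only [smul_eq_mul] at hlt
  nlinarith [hlt]
end

section
/- For any tuple θ₁,...,θ_V ∈ ℝ^d with average μ and covariance matrix Σ, any geometric median g satisfies ‖μ - g‖₂ ≤ √(tr Σ), where Σ_{ij} = (1/V) Σ_v (θ_v[i] - μ[i])(θ_v[j] - μ[j]). -/
/-!
Write `μ - g` as the average of the vectors `θ v - g`. By the triangle inequality `‖μ - g‖` is
at most the average distance from `g` to the points; since `g` is a geometric median this is at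
most the average distance from `μ` to the points, which by Jensen's inequality is at most the
root mean square distance `√(tr Σ)`.
-/

open Finset

lemma norm_inv_card_smul_sum_sub_le {ι E : Type*} [NormedAddCommGroup E] [NormedSpace ℝ E]
    {s : Finset ι} (hs : s.Nonempty) (x : ι → E) (y : E) :
    ‖(#s : ℝ)⁻¹ • ∑ i ∈ s, x i - y‖ ≤ (#s : ℝ)⁻¹ * ∑ i ∈ s, ‖x i - y‖ := by
  have hcard : (#s : ℝ) ≠ 0 := by exact_mod_cast hs.card_pos.ne'
  have haverage : (#s : ℝ)⁻¹ • ∑ i ∈ s, x i - y = (#s : ℝ)⁻¹ • ∑ i ∈ s, (x i - y) := by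
    rw [sum_sub_distrib, smul_sub, sum_const, ← Nat.cast_smul_eq_nsmul ℝ, smul_smul,
      inv_mul_cancel₀ hcard, one_smul]
  rw [haverage, norm_smul, norm_inv, Real.norm_natCast]
  gcongr
  exact norm_sum_le _ _

lemma inv_card_mul_sum_le_sqrt_inv_card_mul_sum_sq {ι : Type*} (s : Finset ι) (f : ι → ℝ) :
    (#s : ℝ)⁻¹ * ∑ i ∈ s, f i ≤ √((#s : ℝ)⁻¹ * ∑ i ∈ s, f i ^ 2) := by
  apply Real.le_sqrt_of_sq_le
  simpa only [inv_mul_eq_div] using sum_div_card_sq_le_sum_sq_div_card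

/-- Any geometric median `g` of `θ 1, ..., θ V` is within `√(tr Σ)` of the average `μ`,
where `tr Σ = (1/V) ∑ v ‖θ v - μ‖₂²` is the trace of the covariance matrix. -/
theorem geometric_median_close_to_average (d V : ℕ) (hV : 0 < V)
    (θ : Fin V → EuclideanSpace ℝ (Fin d)) (μ g : EuclideanSpace ℝ (Fin d))
    (hμ : μ = (V : ℝ)⁻¹ • ∑ v, θ v)
    (hg : ∀ z, ∑ v, ‖g - θ v‖ ≤ ∑ v, ‖z - θ v‖) :
    ‖μ - g‖ ≤ Real.sqrt ((V : ℝ)⁻¹ * ∑ v, ‖θ v - μ‖ ^ 2) := by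
  have hcard : (#(univ : Finset (Fin V)) : ℝ) = V := by simp
  have hnonempty : (univ : Finset (Fin V)).Nonempty := ⟨⟨0, hV⟩, mem_univ _⟩
  calc ‖μ - g‖ ≤ (V : ℝ)⁻¹ * ∑ v, ‖θ v - g‖ := by
        simpa only [hμ, hcard] using norm_inv_card_smul_sum_sub_le hnonempty θ g
    _ ≤ (V : ℝ)⁻¹ * ∑ v, ‖θ v - μ‖ := by
        gcongr _ * ?_
        simpa only [norm_sub_rev] using hg μ
    _ ≤ √((V : ℝ)⁻¹ * ∑ v, ‖θ v - μ‖ ^ 2) := by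
        simpa only [hcard] using inv_card_mul_sum_le_sqrt_inv_card_mul_sum_sq univ (‖θ · - μ‖)
end

section
/- (Byzantine resilience of the geometric median) Let [V] = T ∪ S with |T| > |S|, let g_T be a geometric median of (θ_t)_{t∈T}, and Δ = max_{t∈T} ‖θ_t - g_T‖₂. Then for any choice of vectors (x_s)_{s∈S}, every geometric median of the combined family (θ_T, x_S) lies within distance |T|Δ / √(|T|² - |S|²) of g_T. -/
set_option maxHeartbeats 800000

open RealInnerProductSpace

/-- Key geometric inequality: if `‖b‖ = r`, `‖a - b‖ ≤ Δ < r`, then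
`⟪a, b⟫ ≥ ‖a‖ √(r² - Δ²)`. -/
lemma key_inner_bound {E : Type*} [NormedAddCommGroup E] [InnerProductSpace ℝ E]
    (a b : E) (r Δ : ℝ) (hrb : ‖b‖ = r) (hab : ‖a - b‖ ≤ Δ) (h : Δ < r) :
    ‖a‖ * Real.sqrt (r ^ 2 - Δ ^ 2) ≤ ⟪a, b⟫ := by
  have hΔ0 : 0 ≤ Δ := le_trans (norm_nonneg _) hab
  have hq : 0 < r ^ 2 - Δ ^ 2 := by nlinarith
  have hexp : ‖a - b‖ ^ 2 = ‖a‖ ^ 2 - 2 * ⟪a, b⟫ + ‖b‖ ^ 2 := norm_sub_sq_real a b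
  have habsq : ‖a - b‖ ^ 2 ≤ Δ ^ 2 := by
    have := norm_nonneg (a - b); nlinarith
  have hkey : ‖a‖ ^ 2 + (r ^ 2 - Δ ^ 2) ≤ 2 * ⟪a, b⟫ := by nlinarith [hexp, hrb]
  have hp0 : 0 < ⟪a, b⟫ := by nlinarith [sq_nonneg ‖a‖]
  have hsq : (‖a‖ * Real.sqrt (r ^ 2 - Δ ^ 2)) ^ 2 ≤ ⟪a, b⟫ ^ 2 := by
    rw [mul_pow, Real.sq_sqrt hq.le]
    nlinarith [sq_nonneg (⟪a, b⟫ - (r ^ 2 - Δ ^ 2))]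
  have h1 : 0 ≤ ‖a‖ * Real.sqrt (r ^ 2 - Δ ^ 2) := by positivity
  nlinarith

/-- Byzantine resilience of the geometric median: if `|T| > |S|`, `g_T` is a geometric
median of the truthful vectors `(θ t)_{t ∈ T}`, and `Δ` bounds the distances
`‖θ t - g_T‖₂` for `t ∈ T`, then however the strategic voters in `S` choose their
vectors, every geometric median of the combined family lies within distance
`|T| Δ / √(|T|² - |S|²)` of `g_T`. -/
theorem geometric_median_byzantine_resilience (d : ℕ) {ι : Type} [Fintype ι] [DecidableEq ι]
    (T S : Finset ι) (hdisj : Disjoint T S) (hunion : T ∪ S = Finset.univ)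
    (hTS : S.card < T.card)
    (θ : ι → EuclideanSpace ℝ (Fin d))
    (gT : EuclideanSpace ℝ (Fin d))
    (hgT : ∀ z, ∑ t ∈ T, ‖gT - θ t‖ ≤ ∑ t ∈ T, ‖z - θ t‖)
    (Δ : ℝ) (hΔ : ∀ t ∈ T, ‖θ t - gT‖ ≤ Δ)
    (g : EuclideanSpace ℝ (Fin d))
    (hg : ∀ z, ∑ v, ‖g - θ v‖ ≤ ∑ v, ‖z - θ v‖) :
    ‖g - gT‖ ≤ (T.card : ℝ) * Δ / Real.sqrt ((T.card : ℝ) ^ 2 - (S.card : ℝ) ^ 2) := by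
  classical
  set r := ‖g - gT‖ with hr
  have hT0 : 0 < T.card := lt_of_le_of_lt (Nat.zero_le _) hTS
  obtain ⟨t0, ht0⟩ : T.Nonempty := Finset.card_pos.mp hT0
  have hΔ0 : 0 ≤ Δ := le_trans (norm_nonneg _) (hΔ t0 ht0)
  have hTSr : (S.card : ℝ) < (T.card : ℝ) := by exact_mod_cast hTS
  have hS0 : (0 : ℝ) ≤ S.card := Nat.cast_nonneg _
  have hQ : (0 : ℝ) < (T.card : ℝ) ^ 2 - (S.card : ℝ) ^ 2 := by nlinarith
  have hsqQ : (0 : ℝ) < Real.sqrt ((T.card : ℝ) ^ 2 - (S.card : ℝ) ^ 2) :=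
    Real.sqrt_pos.mpr hQ
  have hsplit : ∀ f : ι → ℝ, ∑ v, f v = ∑ t ∈ T, f t + ∑ s ∈ S, f s := by
    intro f; rw [← hunion, Finset.sum_union hdisj]
  by_cases hcase : r ≤ Δ
  · -- trivial case
    have h1 : Real.sqrt ((T.card : ℝ) ^ 2 - (S.card : ℝ) ^ 2) ≤ (T.card : ℝ) := by
      have h2 := Real.sqrt_le_sqrt
        (show (T.card : ℝ) ^ 2 - (S.card : ℝ) ^ 2 ≤ (T.card : ℝ) ^ 2 by nlinarith)
      rwa [Real.sqrt_sq (by positivity)] at h2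
    rw [le_div_iff₀ hsqQ]
    nlinarith
  · push_neg at hcase
    have hr0 : 0 < r := lt_of_le_of_lt hΔ0 hcase
    set q : ℝ := r ^ 2 - Δ ^ 2 with hqdef
    have hqpos : 0 < q := by nlinarith
    set e : EuclideanSpace ℝ (Fin d) := r⁻¹ • (gT - g) with he
    have hne : ‖e‖ = 1 := by
      rw [he, norm_smul, norm_sub_rev, ← hr, norm_inv, Real.norm_eq_abs,
        abs_of_pos hr0, inv_mul_cancel₀ hr0.ne']
    -- lower bound on ‖g - θ t‖ for t ∈ T
    have hat : ∀ t ∈ T, r - Δ ≤ ‖g - θ t‖ := by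
      intro t ht
      have h1 : r ≤ ‖g - θ t‖ + ‖θ t - gT‖ := by
        have := norm_add_le (g - θ t) (θ t - gT)
        simpa using this
      have := hΔ t ht; linarith
    have hatpos : ∀ t ∈ T, 0 < ‖g - θ t‖ := fun t ht => lt_of_lt_of_le (by linarith) (hat t ht)
    -- inner product bound
    have hinner : ∀ t ∈ T, ‖g - θ t‖ * Real.sqrt q ≤ ⟪g - θ t, g - gT⟫ := by
      intro t ht
      apply key_inner_bound _ _ r Δ hr.symm _ hcase
      have : (g - θ t) - (g - gT) = gT - θ t := by abel
      rw [this, norm_sub_rev]; exact hΔ t ht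
    have hinnere : ∀ t ∈ T, ⟪g - θ t, e⟫ ≤ -(‖g - θ t‖ * Real.sqrt q) / r := by
      intro t ht
      rw [he, real_inner_smul_right]
      have h1 : ⟪g - θ t, gT - g⟫ = -⟪g - θ t, g - gT⟫ := by
        rw [show gT - g = -(g - gT) by abel, inner_neg_right]
      rw [h1]
      have := hinner t ht
      rw [div_eq_inv_mul]
      have hrinv : (0 : ℝ) < r⁻¹ := by positivity
      nlinarith
    -- the main slope inequality, for all h > 0
    have hmain : ∀ h : ℝ, 0 < h →
        (T.card : ℝ) * Real.sqrt q / r ≤ (S.card : ℝ) + h * ∑ t ∈ T, (2 * ‖g - θ t‖)⁻¹ := by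
      intro h hh
      -- per-term bounds
      have hTterm : ∀ t ∈ T, ‖(g + h • e) - θ t‖ ≤
          ‖g - θ t‖ - h * Real.sqrt q / r + h ^ 2 * (2 * ‖g - θ t‖)⁻¹ := by
        intro t ht
        set a := g - θ t with ha
        have hap := hatpos t ht
        have hrw : (g + h • e) - θ t = a + h • e := by rw [ha]; abel
        have hexp : ‖a + h • e‖ ^ 2 = ‖a‖ ^ 2 + 2 * (h * ⟪a, e⟫) + h ^ 2 := by
          have := norm_add_sq_real a (h • e)
          rw [real_inner_smul_right, norm_smul, Real.norm_eq_abs,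
            abs_of_pos hh, hne] at this
          rw [this]; ring
        have hamgm : ‖a + h • e‖ ≤ (‖a‖ ^ 2 + ‖a + h • e‖ ^ 2) / (2 * ‖a‖) := by
          rw [le_div_iff₀ (by positivity)]
          nlinarith [sq_nonneg (‖a + h • e‖ - ‖a‖), norm_nonneg (a + h • e)]
        have h2 : (‖a‖ ^ 2 + ‖a + h • e‖ ^ 2) / (2 * ‖a‖)
            = ‖a‖ + h * ⟪a, e⟫ / ‖a‖ + h ^ 2 * (2 * ‖a‖)⁻¹ := by
          rw [hexp]; field_simp; ring
        have h3 : h * ⟪a, e⟫ / ‖a‖ ≤ -(h * Real.sqrt q / r) := by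
          have hie := hinnere t ht
          rw [div_le_iff₀ hap]
          have : h * ⟪a, e⟫ ≤ h * (-(‖a‖ * Real.sqrt q) / r) :=
            mul_le_mul_of_nonneg_left hie hh.le
          calc h * ⟪a, e⟫ ≤ h * (-(‖a‖ * Real.sqrt q) / r) := this
            _ = -(h * Real.sqrt q / r) * ‖a‖ := by ring
        rw [hrw]
        calc ‖a + h • e‖ ≤ ‖a‖ + h * ⟪a, e⟫ / ‖a‖ + h ^ 2 * (2 * ‖a‖)⁻¹ := by
              rw [← h2]; exact hamgm
          _ ≤ ‖a‖ - h * Real.sqrt q / r + h ^ 2 * (2 * ‖a‖)⁻¹ := by linarith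
      have hSterm : ∀ s : ι, ‖(g + h • e) - θ s‖ ≤ ‖g - θ s‖ + h := by
        intro s
        have : (g + h • e) - θ s = (g - θ s) + h • e := by abel
        rw [this]
        calc ‖(g - θ s) + h • e‖ ≤ ‖g - θ s‖ + ‖h • e‖ := norm_add_le _ _
          _ = ‖g - θ s‖ + h := by
              rw [norm_smul, Real.norm_eq_abs, abs_of_pos hh, hne, mul_one]
      -- optimality of g
      have hopt := hg (g + h • e)
      rw [hsplit, hsplit] at hopt
      have hsum1 : ∑ t ∈ T, ‖(g + h • e) - θ t‖ ≤
          ∑ t ∈ T, (‖g - θ t‖ - h * Real.sqrt q / r + h ^ 2 * (2 * ‖g - θ t‖)⁻¹) :=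
        Finset.sum_le_sum hTterm
      have hsum2 : ∑ s ∈ S, ‖(g + h • e) - θ s‖ ≤ ∑ s ∈ S, (‖g - θ s‖ + h) :=
        Finset.sum_le_sum fun s _ => hSterm s
      rw [Finset.sum_add_distrib, Finset.sum_const, nsmul_eq_mul] at hsum2
      have hsum1' : ∑ t ∈ T, (‖g - θ t‖ - h * Real.sqrt q / r + h ^ 2 * (2 * ‖g - θ t‖)⁻¹)
          = ∑ t ∈ T, ‖g - θ t‖ - (T.card : ℝ) * (h * Real.sqrt q / r)
            + h ^ 2 * ∑ t ∈ T, (2 * ‖g - θ t‖)⁻¹ := by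
        rw [Finset.sum_add_distrib, Finset.sum_sub_distrib, Finset.sum_const,
          nsmul_eq_mul, Finset.mul_sum]
      have hfin : (T.card : ℝ) * (h * Real.sqrt q / r) ≤
          (S.card : ℝ) * h + h ^ 2 * ∑ t ∈ T, (2 * ‖g - θ t‖)⁻¹ := by
        rw [hsum1'] at hsum1; linarith
      have h2 : h * ((T.card : ℝ) * Real.sqrt q / r) ≤
          h * ((S.card : ℝ) + h * ∑ t ∈ T, (2 * ‖g - θ t‖)⁻¹) := by
        calc h * ((T.card : ℝ) * Real.sqrt q / r)
            = (T.card : ℝ) * (h * Real.sqrt q / r) := by ring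
          _ ≤ (S.card : ℝ) * h + h ^ 2 * ∑ t ∈ T, (2 * ‖g - θ t‖)⁻¹ := hfin
          _ = h * ((S.card : ℝ) + h * ∑ t ∈ T, (2 * ‖g - θ t‖)⁻¹) := by ring
      exact le_of_mul_le_mul_left h2 hh
    -- pass to the limit h → 0⁺
    obtain ⟨C, hC⟩ : ∃ C : ℝ, C = ∑ t ∈ T, (2 * ‖g - θ t‖)⁻¹ := ⟨_, rfl⟩
    have hC0 : 0 ≤ C := hC ▸ Finset.sum_nonneg fun t ht => by positivity
    have hmain' : ∀ h : ℝ, 0 < h →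
        (T.card : ℝ) * Real.sqrt q / r ≤ (S.card : ℝ) + h * C := by
      intro h hh; rw [hC]; exact hmain h hh
    clear hmain hC
    have hlim : (T.card : ℝ) * Real.sqrt q / r ≤ (S.card : ℝ) := by
      apply le_of_forall_pos_le_add
      intro ε hε
      have hCpos : (0 : ℝ) < C + 1 := by linarith
      have hh : 0 < ε / (C + 1) := div_pos hε hCpos
      have h8 := hmain' (ε / (C + 1)) hh
      have h3 : ε / (C + 1) * C ≤ ε := by
        rw [div_mul_eq_mul_div, div_le_iff₀ hCpos]
        nlinarith
      linarith
    -- from |T| √q ≤ |S| r, conclude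
    have h4 : (T.card : ℝ) * Real.sqrt q ≤ (S.card : ℝ) * r := by
      rw [div_le_iff₀ hr0] at hlim; linarith
    have h5 : (T.card : ℝ) ^ 2 * q ≤ (S.card : ℝ) ^ 2 * r ^ 2 := by
      have := mul_le_mul h4 h4 (by positivity) (by positivity)
      nlinarith [Real.sq_sqrt hqpos.le, Real.sqrt_nonneg q]
    have h6 : r ^ 2 * ((T.card : ℝ) ^ 2 - (S.card : ℝ) ^ 2) ≤ (T.card : ℝ) ^ 2 * Δ ^ 2 := by
      nlinarith
    rw [le_div_iff₀ hsqQ]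
    have h7 : (r * Real.sqrt ((T.card : ℝ) ^ 2 - (S.card : ℝ) ^ 2)) ^ 2
        ≤ ((T.card : ℝ) * Δ) ^ 2 := by
      rw [mul_pow, Real.sq_sqrt hQ.le]; nlinarith
    have hTΔ : (0 : ℝ) ≤ (T.card : ℝ) * Δ := by positivity
    nlinarith [mul_nonneg hr0.le hsqQ.le]
end

section
/- For any positive definite symmetric matrix S, Skew(S) ≤ λ_max(S)/λ_min(S) - 1, where λ_max and λ_min are the largest and smallest eigenvalues of S. -/
/-!
For a unit vector `u` put `q = uᵀSu`. Cauchy–Schwarz for the inner product `⟨x, y⟩ = xᵀSy`,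
applied to `u` and `Su`, gives `‖Su‖⁴ = (uᵀS(Su))² ≤ q · (Su)ᵀS(Su) ≤ q λ_max ‖Su‖²`, so
`‖Su‖² ≤ λ_max q`. With `λ_min ≤ q ≤ λ_max` this yields
`‖Su‖ / q ≤ √(λ_max / q) ≤ √(λ_max / λ_min) ≤ λ_max / λ_min`. Finally `λ_min > 0` because the
Rayleigh quotient attains its infimum on the compact unit sphere.
-/

/-- `Skew S = sup_{x ≠ 0} ‖x‖₂‖Sx‖₂/(xᵀSx) - 1`, as a supremum over unit vectors. -/
noncomputable def skew {d : ℕ} (S : Matrix (Fin d) (Fin d) ℝ) : ℝ :=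
  ⨆ u : {u : Fin d → ℝ // ∑ i, u i ^ 2 = 1},
    Real.sqrt (∑ i, (S.mulVec u.1 i) ^ 2) / (∑ i, u.1 i * S.mulVec u.1 i) - 1

/-- The smallest eigenvalue of a symmetric matrix, as the infimum of the Rayleigh
quotient over unit vectors. -/
noncomputable def lambdaMin {d : ℕ} (M : Matrix (Fin d) (Fin d) ℝ) : ℝ :=
  ⨅ u : {u : Fin d → ℝ // ∑ i, u i ^ 2 = 1}, ∑ i, u.1 i * M.mulVec u.1 i

/-- The largest eigenvalue of a symmetric matrix, as the supremum of the Rayleigh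
quotient over unit vectors. -/
noncomputable def lambdaMax {d : ℕ} (M : Matrix (Fin d) (Fin d) ℝ) : ℝ :=
  ⨆ u : {u : Fin d → ℝ // ∑ i, u i ^ 2 = 1}, ∑ i, u.1 i * M.mulVec u.1 i

open Matrix

section UnitSphere

variable {ι : Type*} [Fintype ι]

lemma isCompact_setOf_sum_sq_eq_one : IsCompact {u : ι → ℝ | ∑ i, u i ^ 2 = 1} := by
  have hsphere : {u : ι → ℝ | ∑ i, u i ^ 2 = 1} =
      (EuclideanSpace.equiv ι ℝ).symm ⁻¹' Metric.sphere 0 1 := by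
    ext u
    simp [EuclideanSpace.norm_eq, Real.sqrt_eq_one]
  rw [hsphere]
  exact (EuclideanSpace.equiv ι ℝ).symm.toHomeomorph.isCompact_preimage.2
    (isCompact_sphere 0 1)

lemma exists_sum_sq_eq_one [Nonempty ι] : ∃ u : ι → ℝ, ∑ i, u i ^ 2 = 1 := by
  classical
  obtain ⟨i⟩ := ‹Nonempty ι›
  exact ⟨Pi.single i 1, by simp [Pi.single_apply]⟩

lemma isCompact_range_dotProduct_mulVec (M : Matrix ι ι ℝ) :
    IsCompact (Set.range fun u : {u : ι → ℝ // ∑ i, u i ^ 2 = 1} => u.1 ⬝ᵥ M *ᵥ u.1) := by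
  have : CompactSpace {u : ι → ℝ // ∑ i, u i ^ 2 = 1} :=
    isCompact_iff_compactSpace.1 isCompact_setOf_sum_sq_eq_one
  exact isCompact_range (by fun_prop)

lemma dotProduct_mulVec_le_mul_sum_sq {M : Matrix ι ι ℝ} {c : ℝ}
    (h : ∀ u : ι → ℝ, ∑ i, u i ^ 2 = 1 → u ⬝ᵥ M *ᵥ u ≤ c) (v : ι → ℝ) :
    v ⬝ᵥ M *ᵥ v ≤ c * ∑ i, v i ^ 2 := by
  by_cases hv : v = 0
  · simp [hv]
  set s := ∑ i, v i ^ 2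
  have hs : 0 < s := by
    obtain ⟨i, hi⟩ := Function.ne_iff.1 hv
    exact Finset.sum_pos' (fun j _ => sq_nonneg (v j))
      ⟨i, Finset.mem_univ i, sq_pos_of_ne_zero hi⟩
  have hunit : ∑ i, ((√s)⁻¹ • v) i ^ 2 = 1 := by
    simp only [Pi.smul_apply, smul_eq_mul, mul_pow, ← Finset.mul_sum, inv_pow,
      Real.sq_sqrt hs.le]
    exact inv_mul_cancel₀ hs.ne'
  have hscaled := h _ hunit
  rw [mulVec_smul, dotProduct_smul, smul_dotProduct, smul_smul, smul_eq_mul, ← mul_inv,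
    Real.mul_self_sqrt hs.le, inv_mul_le_iff₀ hs] at hscaled
  linarith

lemma Matrix.PosSemidef.sq_dotProduct_mulVec_le {S : Matrix ι ι ℝ} (hS : S.PosSemidef)
    (x y : ι → ℝ) : (x ⬝ᵥ S *ᵥ y) ^ 2 ≤ (x ⬝ᵥ S *ᵥ x) * (y ⬝ᵥ S *ᵥ y) := by
  let := S.toSeminormedAddCommGroup hS
  let := S.toInnerProductSpace hS
  have hinner : ∀ a b : ι → ℝ, inner ℝ a b = a ⬝ᵥ S *ᵥ b := fun a b => by
    change (S *ᵥ b) ⬝ᵥ star a = _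
    rw [star_trivial, dotProduct_comm]
  simpa only [hinner, sq] using real_inner_mul_inner_self_le x y

lemma Matrix.PosSemidef.sum_sq_mulVec_le {S : Matrix ι ι ℝ} (hS : S.PosSemidef) {c : ℝ}
    (hc : 0 ≤ c) (hbound : ∀ v : ι → ℝ, v ⬝ᵥ S *ᵥ v ≤ c * ∑ i, v i ^ 2) (u : ι → ℝ) :
    ∑ i, (S *ᵥ u) i ^ 2 ≤ c * (u ⬝ᵥ S *ᵥ u) := by
  have hSv : u ⬝ᵥ S *ᵥ (S *ᵥ u) = ∑ i, (S *ᵥ u) i ^ 2 := by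
    rw [dotProduct_mulVec, ← mulVec_transpose, ← conjTranspose_eq_transpose_of_trivial,
      hS.isHermitian]
    simp only [dotProduct, sq]
  have hCS := hS.sq_dotProduct_mulVec_le u (S *ᵥ u)
  rw [hSv] at hCS
  have hq : 0 ≤ u ⬝ᵥ S *ᵥ u := by simpa using hS.dotProduct_mulVec_nonneg u
  have hv := hbound (S *ᵥ u)
  rcases (Finset.sum_nonneg fun i _ => sq_nonneg ((S *ᵥ u) i)).eq_or_lt with h0 | hpos
  · rw [← h0]
    positivity
  · exact le_of_mul_le_mul_right (by nlinarith) hpos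

end UnitSphere

lemma sqrt_div_le_div_of_le_mul {n q m M : ℝ} (hm : 0 < m) (hmq : m ≤ q) (hqM : q ≤ M)
    (hn : n ≤ M * q) : √n / q ≤ M / m := by
  rw [div_le_div_iff₀ (hm.trans_le hmq) hm]
  calc √n * m = √(n * m ^ 2) := by rw [Real.sqrt_mul' _ (sq_nonneg m), Real.sqrt_sq hm.le]
    _ ≤ √((M * q) ^ 2) := by
      have hm2 : m ^ 2 ≤ M * q := by nlinarith
      exact Real.sqrt_le_sqrt (by nlinarith [mul_le_mul_of_nonneg_right hn (sq_nonneg m)])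
    _ = M * q := Real.sqrt_sq (by nlinarith)

lemma lambdaMin_le_dotProduct_mulVec {d : ℕ} (M : Matrix (Fin d) (Fin d) ℝ) {u : Fin d → ℝ}
    (hu : ∑ i, u i ^ 2 = 1) : lambdaMin M ≤ u ⬝ᵥ M *ᵥ u :=
  ciInf_le (isCompact_range_dotProduct_mulVec M).bddBelow ⟨u, hu⟩

lemma dotProduct_mulVec_le_lambdaMax {d : ℕ} (M : Matrix (Fin d) (Fin d) ℝ) {u : Fin d → ℝ}
    (hu : ∑ i, u i ^ 2 = 1) : u ⬝ᵥ M *ᵥ u ≤ lambdaMax M :=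
  le_ciSup (isCompact_range_dotProduct_mulVec M).bddAbove ⟨u, hu⟩

lemma exists_dotProduct_mulVec_eq_lambdaMin {d : ℕ} (hd : 0 < d)
    (M : Matrix (Fin d) (Fin d) ℝ) :
    ∃ u : Fin d → ℝ, ∑ i, u i ^ 2 = 1 ∧ u ⬝ᵥ M *ᵥ u = lambdaMin M := by
  have : Nonempty (Fin d) := ⟨⟨0, hd⟩⟩
  obtain ⟨u, hu⟩ := exists_sum_sq_eq_one (ι := Fin d)
  obtain ⟨⟨v, hv⟩, hvmin⟩ := (isCompact_range_dotProduct_mulVec M).sInf_mem ⟨_, ⟨u, hu⟩, rfl⟩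
  exact ⟨v, hv, hvmin⟩

lemma lambdaMin_pos {d : ℕ} (hd : 0 < d) {S : Matrix (Fin d) (Fin d) ℝ} (hS : S.PosDef) :
    0 < lambdaMin S := by
  obtain ⟨u, hu, hmin⟩ := exists_dotProduct_mulVec_eq_lambdaMin hd S
  have hu0 : u ≠ 0 := by
    rintro rfl
    simp at hu
  simpa [← hmin] using hS.dotProduct_mulVec_pos hu0

/-- The skewness is upper bounded by the ratio of extreme eigenvalues minus 1. -/
theorem skew_le_eigenvalue_ratio (d : ℕ) (hd : 0 < d) (S : Matrix (Fin d) (Fin d) ℝ)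
    (hS : S.PosDef) : skew S ≤ lambdaMax S / lambdaMin S - 1 := by
  have hmin := lambdaMin_pos hd hS
  have : Nonempty (Fin d) := ⟨⟨0, hd⟩⟩
  obtain ⟨u₀, hu₀⟩ := exists_sum_sq_eq_one (ι := Fin d)
  have : Nonempty {u : Fin d → ℝ // ∑ i, u i ^ 2 = 1} := ⟨⟨u₀, hu₀⟩⟩
  refine ciSup_le fun ⟨u, hu⟩ => ?_
  have hq_min := lambdaMin_le_dotProduct_mulVec S hu
  have hq_max := dotProduct_mulVec_le_lambdaMax S hu
  have hn := hS.posSemidef.sum_sq_mulVec_le (by linarith)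
    (dotProduct_mulVec_le_mul_sum_sq fun _ => dotProduct_mulVec_le_lambdaMax S) u
  exact sub_le_sub_right (sqrt_div_le_div_of_le_mul hmin hq_min hq_max hn) 1
end

section
/- For any positive definite symmetric matrix S with extreme eigenvalue ratio Λ = λ_max(S)/λ_min(S), one has Skew(S) ≥ (1 + Λ)/(2√Λ) - 1; moreover, in dimension d = 2 this inequality is an equality. -/
/-!
In an orthonormal eigenbasis `vᵢ` of `S`, the weights `wᵢ = ⟪u, vᵢ⟫²` of a unit vector `u` range
over the whole standard simplex, and `uᵀSu = ∑ λᵢ wᵢ`, `‖Su‖² = ∑ λᵢ² wᵢ`. With `m`, `M` the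
extreme eigenvalues, `(λ - m)(λ - M) ≤ 0` on the spectrum gives
`∑ λᵢ² wᵢ ≤ (m + M) ∑ λᵢ wᵢ - mM`, and AM-GM turns this into Kantorovich's bound
`√(∑ λᵢ² wᵢ) / ∑ λᵢ wᵢ ≤ (m + M) / (2√(mM))`, attained by the weights `M / (m + M)` and
`m / (m + M)` on eigenvectors for `m` and `M`. So `Skew S` equals the bound in every dimension.
-/

namespace Matrix.IsHermitian

variable {ι : Type*} [Fintype ι] [DecidableEq ι] {S : Matrix ι ι ℝ}

noncomputable def eigenCoords (hS : S.IsHermitian) (u : ι → ℝ) : ι → ℝ :=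
  fun i => hS.eigenvectorBasis.repr (WithLp.toLp 2 u) i

variable (hS : S.IsHermitian)

theorem sum_eigenCoords_mul (u v : ι → ℝ) :
    ∑ i, hS.eigenCoords u i * hS.eigenCoords v i = ∑ i, u i * v i := by
  have := hS.eigenvectorBasis.repr.inner_map_map (WithLp.toLp 2 u) (WithLp.toLp 2 v)
  simp only [PiLp.inner_apply, RCLike.inner_apply, conj_trivial] at this
  simpa [eigenCoords, mul_comm] using this

theorem eigenCoords_mulVec (u : ι → ℝ) (i : ι) :
    hS.eigenCoords (S *ᵥ u) i = hS.eigenvalues i * hS.eigenCoords u i := by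
  have hsymm := isSymmetric_toEuclideanLin_iff.mpr hS (hS.eigenvectorBasis i) (WithLp.toLp 2 u)
  simp only [toLpLin_apply, mulVec_eigenvectorBasis] at hsymm
  simp only [eigenCoords, OrthonormalBasis.repr_apply_apply]
  rw [← hsymm, WithLp.toLp_smul, WithLp.toLp_ofLp, real_inner_smul_left]

theorem eigenCoords_surjective : Function.Surjective hS.eigenCoords := fun c =>
  ⟨WithLp.ofLp (hS.eigenvectorBasis.repr.symm (WithLp.toLp 2 c)), by
    funext i; simp [eigenCoords]⟩

theorem sum_sq_eigenCoords (u : ι → ℝ) : ∑ i, hS.eigenCoords u i ^ 2 = ∑ i, u i ^ 2 := by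
  simpa only [sq] using hS.sum_eigenCoords_mul u u

theorem sum_mul_mulVec_eq (u : ι → ℝ) :
    ∑ i, u i * (S *ᵥ u) i = ∑ i, hS.eigenvalues i * hS.eigenCoords u i ^ 2 := by
  simp only [← hS.sum_eigenCoords_mul u, hS.eigenCoords_mulVec, sq, mul_left_comm]

theorem sum_sq_mulVec_eq (u : ι → ℝ) :
    ∑ i, (S *ᵥ u) i ^ 2 = ∑ i, hS.eigenvalues i ^ 2 * hS.eigenCoords u i ^ 2 := by
  simp only [← hS.sum_sq_eigenCoords, hS.eigenCoords_mulVec, mul_pow]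

theorem range_sq_eigenCoords :
    Set.range (fun u : {u : ι → ℝ // ∑ i, u i ^ 2 = 1} => hS.eigenCoords u.1 ^ 2) =
      stdSimplex ℝ ι := by
  ext w
  constructor
  · rintro ⟨u, rfl⟩
    exact ⟨fun i => sq_nonneg _, by simpa [hS.sum_sq_eigenCoords] using u.2⟩
  · rintro ⟨hw, hsum⟩
    obtain ⟨u, hu⟩ := hS.eigenCoords_surjective fun i => √(w i)
    refine ⟨⟨u, ?_⟩, ?_⟩
    · simp [← hS.sum_sq_eigenCoords, hu, Real.sq_sqrt (hw _), hsum]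
    · funext i; simp [hu, Real.sq_sqrt (hw i)]

end Matrix.IsHermitian

section Simplex

variable {ι : Type*} [Fintype ι] (μ : ι → ℝ)

theorem isLeast_image_stdSimplex_sum_mul {i : ι} (hi : ∀ j, μ i ≤ μ j) :
    IsLeast ((fun w => ∑ j, μ j * w j) '' stdSimplex ℝ ι) (μ i) := by
  classical
  refine ⟨⟨Pi.single i 1, single_mem_stdSimplex ℝ i, by simp [Pi.single_apply]⟩, ?_⟩
  rintro _ ⟨w, ⟨hw, hsum⟩, rfl⟩
  calc μ i = ∑ j, μ i * w j := by rw [← Finset.mul_sum, hsum, mul_one]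
    _ ≤ ∑ j, μ j * w j := Finset.sum_le_sum fun j _ => mul_le_mul_of_nonneg_right (hi j) (hw j)

theorem isGreatest_image_stdSimplex_sum_mul {i : ι} (hi : ∀ j, μ j ≤ μ i) :
    IsGreatest ((fun w => ∑ j, μ j * w j) '' stdSimplex ℝ ι) (μ i) := by
  classical
  refine ⟨⟨Pi.single i 1, single_mem_stdSimplex ℝ i, by simp [Pi.single_apply]⟩, ?_⟩
  rintro _ ⟨w, ⟨hw, hsum⟩, rfl⟩
  calc ∑ j, μ j * w j ≤ ∑ j, μ i * w j :=
        Finset.sum_le_sum fun j _ => mul_le_mul_of_nonneg_right (hi j) (hw j)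
    _ = μ i := by rw [← Finset.mul_sum, hsum, mul_one]

variable {μ} {m M : ℝ} {w : ι → ℝ}

theorem sum_sq_mul_le_of_mem_Icc (hμ : ∀ j, μ j ∈ Set.Icc m M) (hw : w ∈ stdSimplex ℝ ι) :
    ∑ j, μ j ^ 2 * w j ≤ (m + M) * ∑ j, μ j * w j - m * M := by
  calc ∑ j, μ j ^ 2 * w j ≤ ∑ j, ((m + M) * μ j - m * M) * w j :=
        Finset.sum_le_sum fun j _ => mul_le_mul_of_nonneg_right
          (by nlinarith [(hμ j).1, (hμ j).2]) (hw.1 j)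
    _ = (m + M) * ∑ j, μ j * w j - m * M := by
        simp only [sub_mul, Finset.sum_sub_distrib, ← Finset.mul_sum, mul_assoc, hw.2, mul_one]

/-- **Kantorovich's inequality**, in the form of a bound on weighted sums. -/
theorem sqrt_sum_sq_mul_div_sum_mul_le (hm : 0 < m) (hμ : ∀ j, μ j ∈ Set.Icc m M)
    (hw : w ∈ stdSimplex ℝ ι) :
    √(∑ j, μ j ^ 2 * w j) / ∑ j, μ j * w j ≤ (m + M) / (2 * √(m * M)) := by
  obtain ⟨j, -, -⟩ := Finset.exists_ne_zero_of_sum_ne_zero (hw.2.symm ▸ one_ne_zero)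
  have hM : 0 < M := hm.trans_le ((hμ j).1.trans (hμ j).2)
  set R := ∑ j, μ j * w j
  set Q := ∑ j, μ j ^ 2 * w j
  have hQ : 0 ≤ Q := Finset.sum_nonneg fun j _ => mul_nonneg (sq_nonneg _) (hw.1 j)
  have hQR : Q ≤ (m + M) * R - m * M := sum_sq_mul_le_of_mem_Icc hμ hw
  have hR : 0 < R := by nlinarith [mul_pos hm hM]
  rw [div_le_div_iff₀ hR (by positivity), ← pow_le_pow_iff_left₀ (by positivity) (by positivity)
    two_ne_zero, mul_pow, mul_pow, Real.sq_sqrt hQ, Real.sq_sqrt (by positivity)]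
  -- AM-GM: `4 m M ((m + M) R - m M) ≤ ((m + M) R)²`
  nlinarith [sq_nonneg ((m + M) * R - 2 * (m * M)), mul_pos hm hM]

theorem sqrt_div_eq_add_div_two_mul_sqrt {m M : ℝ} (hm : 0 < m) (hM : 0 < M) :
    √(m * M) / (2 * (m * M) / (m + M)) = (m + M) / (2 * √(m * M)) := by
  have hs2 : √(m * M) ^ 2 = m * M := Real.sq_sqrt (mul_pos hm hM).le
  field_simp
  nlinarith [hs2]

variable (μ) in
theorem isGreatest_image_stdSimplex_sqrt_div {i₀ i₁ : ι} (hm : 0 < μ i₀)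
    (h₀ : ∀ j, μ i₀ ≤ μ j) (h₁ : ∀ j, μ j ≤ μ i₁) :
    IsGreatest ((fun w => √(∑ j, μ j ^ 2 * w j) / ∑ j, μ j * w j) '' stdSimplex ℝ ι)
      ((μ i₀ + μ i₁) / (2 * √(μ i₀ * μ i₁))) := by
  classical
  set m := μ i₀
  set M := μ i₁
  have hM : 0 < M := hm.trans_le (h₀ i₁)
  refine ⟨?_, ?_⟩
  · set w : ι → ℝ := (M / (m + M)) • Pi.single i₀ 1 + (m / (m + M)) • Pi.single i₁ 1
    have hw : w ∈ stdSimplex ℝ ι := segment_single_subset_stdSimplex ℝ i₀ i₁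
      ⟨_, _, by positivity, by positivity, by field_simp; ring, rfl⟩
    have hsum (f : ι → ℝ) : ∑ j, f j * w j = M / (m + M) * f i₀ + m / (m + M) * f i₁ := by
      simp [w, mul_add, Finset.sum_add_distrib, Pi.single_apply, mul_comm]
    refine ⟨w, hw, ?_⟩
    simp only [hsum]
    rw [← sqrt_div_eq_add_div_two_mul_sqrt hm hM]
    congr 2 <;> field_simp <;> ring
  · rintro _ ⟨w, hw, rfl⟩
    exact sqrt_sum_sq_mul_div_sum_mul_le hm (fun j => ⟨h₀ j, h₁ j⟩) hw

end Simplex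

theorem add_div_two_mul_sqrt_mul_eq {m M : ℝ} (hm : 0 < m) (hM : 0 < M) :
    (m + M) / (2 * √(m * M)) = (1 + M / m) / (2 * √(M / m)) := by
  rw [show M / m = m * M / m ^ 2 by field_simp, Real.sqrt_div (by positivity),
    Real.sqrt_sq hm.le]
  field_simp

section Skew

variable {d : ℕ} {S : Matrix (Fin d) (Fin d) ℝ}

theorem Matrix.IsHermitian.lambdaMin_eq (hS : S.IsHermitian) {i : Fin d}
    (hi : ∀ j, hS.eigenvalues i ≤ hS.eigenvalues j) : lambdaMin S = hS.eigenvalues i := by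
  rw [← (isLeast_image_stdSimplex_sum_mul _ hi).csInf_eq, ← hS.range_sq_eigenCoords,
    ← Set.range_comp, lambdaMin]
  simp only [hS.sum_mul_mulVec_eq]
  rfl

theorem Matrix.IsHermitian.lambdaMax_eq (hS : S.IsHermitian) {i : Fin d}
    (hi : ∀ j, hS.eigenvalues j ≤ hS.eigenvalues i) : lambdaMax S = hS.eigenvalues i := by
  rw [← (isGreatest_image_stdSimplex_sum_mul _ hi).csSup_eq, ← hS.range_sq_eigenCoords,
    ← Set.range_comp, lambdaMax]
  simp only [hS.sum_mul_mulVec_eq]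
  rfl

theorem Matrix.PosDef.skew_eq [Nonempty (Fin d)] (hS : S.PosDef) :
    skew S = (1 + lambdaMax S / lambdaMin S) / (2 * √(lambdaMax S / lambdaMin S)) - 1 := by
  obtain ⟨i₀, h₀⟩ := Finite.exists_min hS.isHermitian.eigenvalues
  obtain ⟨i₁, h₁⟩ := Finite.exists_max hS.isHermitian.eigenvalues
  have hK := (Monotone.map_isGreatest (f := fun x : ℝ => x - 1) (fun _ _ h => by simpa)
    (isGreatest_image_stdSimplex_sqrt_div _ (hS.eigenvalues_pos i₀) h₀ h₁)).csSup_eq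
  rw [Set.image_image] at hK
  rw [hS.isHermitian.lambdaMin_eq h₀, hS.isHermitian.lambdaMax_eq h₁,
    ← add_div_two_mul_sqrt_mul_eq (hS.eigenvalues_pos i₀) (hS.eigenvalues_pos i₁), ← hK,
    ← hS.isHermitian.range_sq_eigenCoords, ← Set.range_comp, skew]
  simp only [hS.isHermitian.sum_sq_mulVec_eq, hS.isHermitian.sum_mul_mulVec_eq]
  rfl

end Skew

/-- Lower bound on skewness: with `Λ` the ratio of extreme eigenvalues,
`Skew S ≥ (1+Λ)/(2√Λ) - 1`, with equality in dimension 2. -/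
theorem skew_ge_eigenvalue_ratio_bound (d : ℕ) (hd : 0 < d)
    (S : Matrix (Fin d) (Fin d) ℝ) (hS : S.PosDef) :
    (1 + lambdaMax S / lambdaMin S) / (2 * Real.sqrt (lambdaMax S / lambdaMin S)) - 1
        ≤ skew S ∧
      (d = 2 →
        skew S =
          (1 + lambdaMax S / lambdaMin S) /
              (2 * Real.sqrt (lambdaMax S / lambdaMin S)) - 1) := by
  have : Nonempty (Fin d) := ⟨⟨0, hd⟩⟩
  exact ⟨hS.skew_eq.ge, fun _ => hS.skew_eq⟩
end

section
/- The skewness function S ↦ Skew(S) is continuous on the set of positive definite symmetric d × d matrices; quantitatively, |Skew(H) - Skew(S)| ≤ (2 + Skew(H)) · d · ‖H - S‖_∞ / λ_min(S). -/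
open Matrix WithLp Filter Topology

lemma abs_ciSup_sub_ciSup_le {ι : Type*} [Nonempty ι] {f g : ι → ℝ}
    (hf : BddAbove (Set.range f)) (hg : BddAbove (Set.range g)) {K : ℝ}
    (h : ∀ i, |f i - g i| ≤ K) : |(⨆ i, f i) - ⨆ i, g i| ≤ K := by
  rw [abs_sub_le_iff, sub_le_iff_le_add, sub_le_iff_le_add]
  constructor
  · exact ciSup_le fun i => by linarith [(abs_sub_le_iff.1 (h i)).1, le_ciSup hg i]
  · exact ciSup_le fun i => by linarith [(abs_sub_le_iff.1 (h i)).2, le_ciSup hf i]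

lemma abs_div_sub_div_le {a b p q D s l : ℝ} (ha : 0 ≤ a) (hp : 0 < p) (hl : 0 < l)
    (hlq : l ≤ q) (hab : |a - b| ≤ D) (hpq : |p - q| ≤ D) (hs : a / p - 1 ≤ s) :
    |a / p - b / q| ≤ (2 + s) * D / l := by
  have hq : 0 < q := hl.trans_le hlq
  have hD : 0 ≤ D := (abs_nonneg _).trans hab
  have hap : 0 ≤ a / p := div_nonneg ha hp.le
  calc |a / p - b / q| = |a / p * (q - p) + (a - b)| / q := by
        rw [← abs_of_pos hq, ← abs_div, abs_of_pos hq]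
        congr 1
        field_simp
        ring
    _ ≤ (a / p * D + D) / q := by
        gcongr
        refine (abs_add_le _ _).trans (add_le_add ?_ hab)
        rw [abs_mul, abs_of_nonneg hap, abs_sub_comm]
        gcongr
    _ = (a / p + 1) * D / q := by ring
    _ ≤ (2 + s) * D / l :=
        div_le_div₀ (mul_nonneg (by linarith) hD) (mul_le_mul_of_nonneg_right (by linarith) hD)
          hl hlq

variable {d : ℕ}

def unitSphere (d : ℕ) : Set (Fin d → ℝ) := {u | ∑ i, u i ^ 2 = 1}

lemma norm_toLp_eq_sqrt (x : Fin d → ℝ) : ‖toLp 2 x‖ = √(∑ i, x i ^ 2) := by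
  simp [EuclideanSpace.norm_eq]

lemma unitSphere_eq_image_sphere :
    unitSphere d = ofLp '' Metric.sphere (0 : EuclideanSpace ℝ (Fin d)) 1 := by
  rw [EuclideanSpace.sphere_zero_eq 1 zero_le_one]
  ext u
  exact ⟨fun hu => ⟨toLp 2 u, by simpa [unitSphere] using hu, rfl⟩,
    by rintro ⟨x, hx, rfl⟩; simpa [unitSphere] using hx⟩

lemma isCompact_unitSphere : IsCompact (unitSphere d) := by
  rw [unitSphere_eq_image_sphere]
  exact (isCompact_sphere 0 1).image (PiLp.continuous_ofLp 2 _)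

lemma nonempty_unitSphere [NeZero d] : (unitSphere d).Nonempty :=
  ⟨Pi.single 0 1, by simp [unitSphere, Pi.single_apply]⟩

instance [NeZero d] : Nonempty (unitSphere d) := nonempty_unitSphere.to_subtype

lemma norm_toLp_eq_one {u : Fin d → ℝ} (hu : u ∈ unitSphere d) : ‖toLp 2 u‖ = 1 := by
  rw [norm_toLp_eq_sqrt, hu, Real.sqrt_one]

lemma abs_dotProduct_le (x y : Fin d → ℝ) : |x ⬝ᵥ y| ≤ ‖toLp 2 x‖ * ‖toLp 2 y‖ := by
  simpa [EuclideanSpace.inner_toLp_toLp, mul_comm] using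
    abs_real_inner_le_norm (toLp 2 y) (toLp 2 x)

lemma norm_toLp_le_sqrt_mul {x : Fin d → ℝ} {c : ℝ} (hc₀ : 0 ≤ c) (hc : ∀ i, |x i| ≤ c) :
    ‖toLp 2 x‖ ≤ √d * c :=
  calc ‖toLp 2 x‖ = √(∑ i, x i ^ 2) := norm_toLp_eq_sqrt x
    _ ≤ √(∑ _i : Fin d, c ^ 2) :=
        Real.sqrt_le_sqrt <| Finset.sum_le_sum fun i _ =>
          sq_le_sq' (abs_le.1 (hc i)).1 (abs_le.1 (hc i)).2
    _ = √d * c := by simp [Real.sqrt_mul, hc₀]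

section EntrywiseSupNorm

attribute [local instance] Matrix.normedAddCommGroup

variable {H S M : Matrix (Fin d) (Fin d) ℝ} {u : Fin d → ℝ}

lemma norm_toLp_mulVec_le (A : Matrix (Fin d) (Fin d) ℝ) (hu : u ∈ unitSphere d) :
    ‖toLp 2 (A *ᵥ u)‖ ≤ d * ‖A‖ := by
  have entry_le : ∀ i, |(A *ᵥ u) i| ≤ √d * ‖A‖ := fun i =>
    calc |(A *ᵥ u) i| ≤ ‖toLp 2 (A i)‖ * ‖toLp 2 u‖ := abs_dotProduct_le _ _
      _ ≤ √d * ‖A‖ := by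
        rw [norm_toLp_eq_one hu, mul_one]
        exact norm_toLp_le_sqrt_mul (norm_nonneg A) fun _ => norm_entry_le_entrywise_sup_norm A
  calc ‖toLp 2 (A *ᵥ u)‖ ≤ √d * (√d * ‖A‖) := norm_toLp_le_sqrt_mul (by positivity) entry_le
    _ = d * ‖A‖ := by rw [← mul_assoc, Real.mul_self_sqrt d.cast_nonneg]

lemma abs_dotProduct_mulVec_sub_le (hu : u ∈ unitSphere d) :
    |u ⬝ᵥ H *ᵥ u - u ⬝ᵥ S *ᵥ u| ≤ d * ‖H - S‖ := by
  rw [← dotProduct_sub, ← sub_mulVec]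
  calc _ ≤ ‖toLp 2 u‖ * ‖toLp 2 ((H - S) *ᵥ u)‖ := abs_dotProduct_le _ _
    _ ≤ d * ‖H - S‖ := by
        rw [norm_toLp_eq_one hu, one_mul]
        exact norm_toLp_mulVec_le _ hu

lemma abs_norm_mulVec_sub_le (hu : u ∈ unitSphere d) :
    |‖toLp 2 (H *ᵥ u)‖ - ‖toLp 2 (S *ᵥ u)‖| ≤ d * ‖H - S‖ :=
  calc _ ≤ ‖toLp 2 (H *ᵥ u) - toLp 2 (S *ᵥ u)‖ := abs_norm_sub_norm_le _ _
    _ = ‖toLp 2 ((H - S) *ᵥ u)‖ := by rw [sub_mulVec, toLp_sub]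
    _ ≤ d * ‖H - S‖ := norm_toLp_mulVec_le _ hu

noncomputable def skewAt (M : Matrix (Fin d) (Fin d) ℝ) (u : Fin d → ℝ) : ℝ :=
  ‖toLp 2 (M *ᵥ u)‖ / (u ⬝ᵥ M *ᵥ u) - 1

lemma skew_eq_iSup_skewAt (M : Matrix (Fin d) (Fin d) ℝ) :
    skew M = ⨆ u : unitSphere d, skewAt M u := by
  simp only [skew, skewAt, norm_toLp_eq_sqrt]
  rfl

lemma lambdaMin_eq_iInf (M : Matrix (Fin d) (Fin d) ℝ) :
    lambdaMin M = ⨅ u : unitSphere d, u.1 ⬝ᵥ M *ᵥ u :=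
  rfl

lemma dotProduct_mulVec_pos (hM : M.PosDef) (hu : u ∈ unitSphere d) : 0 < u ⬝ᵥ M *ᵥ u := by
  have hu₀ : u ≠ 0 := by
    rintro rfl
    simp [unitSphere] at hu
  simpa using hM.dotProduct_mulVec_pos hu₀

lemma lambdaMin_le (hM : M.PosDef) (hu : u ∈ unitSphere d) : lambdaMin M ≤ u ⬝ᵥ M *ᵥ u := by
  rw [lambdaMin_eq_iInf]
  exact ciInf_le ⟨0, by rintro _ ⟨v, rfl⟩; exact (dotProduct_mulVec_pos hM v.2).le⟩
    (⟨u, hu⟩ : unitSphere d)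

lemma lambdaMin_pos_s15 [NeZero d] (hM : M.PosDef) : 0 < lambdaMin M := by
  obtain ⟨v, hv, hmin⟩ := isCompact_unitSphere.exists_isMinOn nonempty_unitSphere
    (by fun_prop : Continuous fun u : Fin d → ℝ => u ⬝ᵥ M *ᵥ u).continuousOn
  rw [lambdaMin_eq_iInf]
  exact (dotProduct_mulVec_pos hM hv).trans_le (le_ciInf fun u => hmin u.2)

lemma bddAbove_skewAt [NeZero d] (hM : M.PosDef) :
    BddAbove (Set.range fun u : unitSphere d => skewAt M u) := by
  refine ⟨d * ‖M‖ / lambdaMin M - 1, ?_⟩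
  rintro _ ⟨⟨u, hu⟩, rfl⟩
  exact sub_le_sub_right (div_le_div₀ (by positivity) (norm_toLp_mulVec_le M hu)
    (lambdaMin_pos_s15 hM) (lambdaMin_le hM hu)) 1

lemma skewAt_le_skew [NeZero d] (hM : M.PosDef) (hu : u ∈ unitSphere d) :
    skewAt M u ≤ skew M := by
  rw [skew_eq_iSup_skewAt]
  exact le_ciSup (bddAbove_skewAt hM) ⟨u, hu⟩

lemma skewAt_nonneg (hM : M.PosDef) (hu : u ∈ unitSphere d) : 0 ≤ skewAt M u := by
  have hle : u ⬝ᵥ M *ᵥ u ≤ ‖toLp 2 (M *ᵥ u)‖ := by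
    simpa [norm_toLp_eq_one hu] using (le_abs_self _).trans (abs_dotProduct_le u (M *ᵥ u))
  rw [skewAt, sub_nonneg]
  exact (one_le_div (dotProduct_mulVec_pos hM hu)).2 hle

lemma skew_nonneg [NeZero d] (hM : M.PosDef) : 0 ≤ skew M := by
  obtain ⟨u, hu⟩ := nonempty_unitSphere (d := d)
  exact (skewAt_nonneg hM hu).trans (skewAt_le_skew hM hu)

lemma abs_skewAt_sub_skewAt_le [NeZero d] (hH : H.PosDef) (hS : S.PosDef)
    (hu : u ∈ unitSphere d) :
    |skewAt H u - skewAt S u| ≤ (2 + skew H) * d * ‖H - S‖ / lambdaMin S := by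
  rw [skewAt, skewAt, sub_sub_sub_cancel_right, mul_assoc]
  exact abs_div_sub_div_le (norm_nonneg _) (dotProduct_mulVec_pos hH hu) (lambdaMin_pos_s15 hS)
    (lambdaMin_le hS hu) (abs_norm_mulVec_sub_le hu) (abs_dotProduct_mulVec_sub_le hu)
    (skewAt_le_skew hH hu)

lemma abs_skew_sub_skew_le [NeZero d] (hH : H.PosDef) (hS : S.PosDef) :
    |skew H - skew S| ≤ (2 + skew H) * d * ‖H - S‖ / lambdaMin S := by
  conv_lhs => rw [skew_eq_iSup_skewAt H, skew_eq_iSup_skewAt S]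
  exact abs_ciSup_sub_ciSup_le (bddAbove_skewAt hH) (bddAbove_skewAt hS)
    fun u => abs_skewAt_sub_skewAt_le hH hS u.2

lemma abs_skew_sub_skew_le_of_abs_sub_le [NeZero d] (hH : H.PosDef) (hS : S.PosDef) {ε : ℝ}
    (hε : ∀ i j, |H i j - S i j| ≤ ε) :
    |skew H - skew S| ≤ (2 + skew H) * d * ε / lambdaMin S := by
  have hnorm : ‖H - S‖ ≤ ε := (norm_le_iff ((abs_nonneg _).trans (hε 0 0))).2 hε
  have := skew_nonneg hH
  have := lambdaMin_pos_s15 hS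
  grw [abs_skew_sub_skew_le hH hS, hnorm]

lemma sub_le_lambdaMin [NeZero d] (hS : S.PosDef) (M : Matrix (Fin d) (Fin d) ℝ) :
    lambdaMin S - d * ‖M - S‖ ≤ lambdaMin M := by
  rw [lambdaMin_eq_iInf M]
  refine le_ciInf fun u => ?_
  have := (abs_sub_le_iff.1 (abs_dotProduct_mulVec_sub_le (H := M) (S := S) u.2)).2
  linarith [lambdaMin_le hS u.2]

lemma continuousOn_skew [NeZero d] : ContinuousOn (skew (d := d)) {M | M.PosDef} := by
  intro S hS
  set C := (2 + skew S) * d / (lambdaMin S / 2)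
  have hlam := lambdaMin_pos_s15 hS
  have norm_tendsto : Tendsto (fun M => ‖M - S‖) (𝓝 S) (𝓝 0) := tendsto_norm_sub_self S
  have near : ∀ᶠ M in 𝓝 S, d * ‖M - S‖ < lambdaMin S / 2 := by
    refine Tendsto.eventually_lt_const (half_pos hlam) ?_
    simpa using norm_tendsto.const_mul (d : ℝ)
  have lipschitz_at : ∀ᶠ M in 𝓝[{M | M.PosDef}] S, ‖skew M - skew S‖ ≤ C * ‖M - S‖ := by
    filter_upwards [self_mem_nhdsWithin, nhdsWithin_le_nhds near] with M hM hnear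
    have hlamM : lambdaMin S / 2 ≤ lambdaMin M := by linarith [sub_le_lambdaMin hS M]
    have := skew_nonneg hS
    calc ‖skew M - skew S‖ = |skew S - skew M| := by rw [Real.norm_eq_abs, abs_sub_comm]
      _ ≤ (2 + skew S) * d * ‖S - M‖ / lambdaMin M := abs_skew_sub_skew_le hS hM
      _ ≤ (2 + skew S) * d * ‖S - M‖ / (lambdaMin S / 2) := by gcongr
      _ = C * ‖M - S‖ := by rw [norm_sub_rev]; ring
  rw [ContinuousWithinAt, ← tendsto_sub_nhds_zero_iff]
  refine squeeze_zero_norm' lipschitz_at (tendsto_nhdsWithin_of_tendsto_nhds ?_)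
  simpa using norm_tendsto.const_mul C

end EntrywiseSupNorm

/-- Skewness is continuous on positive definite symmetric matrices; quantitatively,
`|Skew H - Skew S| ≤ (2 + Skew H) · d · ‖H - S‖_∞ / λ_min S`. -/
theorem skew_continuous (d : ℕ) (H S : Matrix (Fin d) (Fin d) ℝ)
    (hH : H.PosDef) (hS : S.PosDef) (ε : ℝ) (hε : ∀ i j, |H i j - S i j| ≤ ε) :
    |skew H - skew S| ≤ (2 + skew H) * (d : ℝ) * ε / lambdaMin S ∧
      ContinuousOn skew {M : Matrix (Fin d) (Fin d) ℝ | M.PosDef} := by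
  rcases d.eq_zero_or_pos with rfl | hd
  · exact ⟨by simp [Subsingleton.elim H S], Set.subsingleton_of_subsingleton.continuousOn _⟩
  have : NeZero d := NeZero.of_pos hd
  exact ⟨abs_skew_sub_skew_le_of_abs_sub_le hH hS hε, continuousOn_skew⟩
end
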